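/- Let Γ be a normal submonoid of ℤⁿ with no nonzero invertible elements, and k a commutative ℚ-algebra. Then the ghost map gh : W_Γ(k) → ∏_{Γ∖{0}} k, defined by gh(a)(η) = Σ_{e·γ=η} c(γ)·a(γ)^e, is a bijection. -/
import Mathlib


/-- Γ ⊆ ℤⁿ is normal: if d·v ∈ Γ for some positive integer d, then v ∈ Γ. -/
def IsNormalMonoid {n : ℕ} (Γ : AddSubmonoid (Fin n → ℤ)) : Prop :=
  ∀ (v : Fin n → ℤ) (d : ℕ), 0 < d → d • v ∈ Γ → v ∈ Γ

/-- Γ has no invertible elements except 0. -/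
def NoUnits {n : ℕ} (Γ : AddSubmonoid (Fin n → ℤ)) : Prop :=
  ∀ v ∈ Γ, -v ∈ Γ → v = 0

/-- A nonzero v ∈ Γ is primitive if v = e • w with w ∈ Γ forces e = 1. -/
def IsPrimitive {n : ℕ} (Γ : AddSubmonoid (Fin n → ℤ)) (v : Fin n → ℤ) : Prop :=
  v ∈ Γ ∧ v ≠ 0 ∧ ∀ (e : ℕ) (w : Fin n → ℤ), w ∈ Γ → v = e • w → e = 1

/-- The content of γ: gcd of its coordinates. -/
def content {n : ℕ} (γ : Fin n → ℤ) : ℕ := Finset.univ.gcd fun i => (γ i).natAbs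

/-- The ghost map associated to a set S of lattice points:
gh(a)(η) = Σ_{e·γ = η, e ≥ 1, γ ∈ S, γ ≠ 0} c(γ)·a(γ)^e. -/
noncomputable def ghostOn {n : ℕ} (k : Type) [CommRing k] (S : Set (Fin n → ℤ))
    (a : (Fin n → ℤ) → k) : (Fin n → ℤ) → k := fun η =>
  ∑ᶠ (p : ℕ × (Fin n → ℤ)) (_ : 1 ≤ p.1 ∧ p.2 ∈ S ∧ p.2 ≠ 0 ∧ p.1 • p.2 = η),
    (content p.2 : k) * a p.2 ^ p.1

/-- Pointed functions on Γ: a(0) = 0 (and a vanishes off Γ). -/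
def PointedFun {n : ℕ} {k : Type} [CommRing k] (Γ : AddSubmonoid (Fin n → ℤ))
    (a : (Fin n → ℤ) → k) : Prop := a 0 = 0 ∧ ∀ x ∉ Γ, a x = 0

section Aux

variable {n : ℕ} {k : Type} [CommRing k]

/-- The condition defining the index set of the ghost sum. -/
def GhCond {n : ℕ} (S : Set (Fin n → ℤ)) (η : Fin n → ℤ) (p : ℕ × (Fin n → ℤ)) : Prop :=
  1 ≤ p.1 ∧ p.2 ∈ S ∧ p.2 ≠ 0 ∧ p.1 • p.2 = η

lemma ghCond_finite (S : Set (Fin n → ℤ)) (η : Fin n → ℤ) :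
    {p | GhCond S η p}.Finite := by
  rcases eq_or_ne η 0 with rfl | hη
  · have : {p | GhCond S 0 p} = ∅ := by
      ext ⟨e, γ⟩
      simp only [Set.mem_setOf_eq, Set.mem_empty_iff_false, iff_false]
      rintro ⟨h1, _, h3, h4⟩
      apply h3
      funext i
      have t := congrFun h4 i
      simp only [Pi.smul_apply, smul_eq_mul, nsmul_eq_mul, Pi.zero_apply] at t
      have he : (e : ℤ) ≠ 0 := by exact_mod_cast Nat.one_le_iff_ne_zero.mp h1
      exact (mul_eq_zero.mp t).resolve_left he
    rw [this]; exact Set.finite_empty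
  · obtain ⟨i, hi⟩ := Function.ne_iff.mp hη
    simp only [Pi.zero_apply] at hi
    apply Set.Finite.of_finite_image (f := Prod.fst)
    · apply Set.Finite.subset (Set.finite_Icc 1 (η i).natAbs)
      rintro e ⟨⟨e', γ⟩, ⟨h1, _, _, h4⟩, rfl⟩
      refine ⟨h1, ?_⟩
      have t := congrFun h4 i
      simp only [Pi.smul_apply, nsmul_eq_mul] at t
      have hd : ((e' : ℤ)).natAbs ∣ (η i).natAbs :=
        Int.natAbs_dvd_natAbs.mpr ⟨γ i, t.symm⟩
      simpa using Nat.le_of_dvd (Int.natAbs_pos.mpr hi) hd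
    · rintro ⟨e, γ⟩ ⟨h1, _, _, h4⟩ ⟨e', γ'⟩ ⟨_, _, _, h4'⟩ (he : e = e')
      subst he
      have he0 : (e : ℤ) ≠ 0 := by exact_mod_cast Nat.one_le_iff_ne_zero.mp h1
      have : γ = γ' := by
        funext i
        have t1 := congrFun h4 i
        have t2 := congrFun h4' i
        simp only [Pi.smul_apply, nsmul_eq_mul] at t1 t2
        exact mul_left_cancel₀ he0 (t1.trans t2.symm)
      simp [this]

/-- The finite index set of the ghost sum. -/
noncomputable def ghFinset (S : Set (Fin n → ℤ)) (η : Fin n → ℤ) : Finset (ℕ × (Fin n → ℤ)) :=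
  (ghCond_finite S η).toFinset

lemma mem_ghFinset {S : Set (Fin n → ℤ)} {η : Fin n → ℤ} {p : ℕ × (Fin n → ℤ)} :
    p ∈ ghFinset S η ↔ GhCond S η p := Set.Finite.mem_toFinset _

lemma ghostOn_eq_sum (S : Set (Fin n → ℤ)) (a : (Fin n → ℤ) → k) (η : Fin n → ℤ) :
    ghostOn k S a η = ∑ p ∈ ghFinset S η, (content p.2 : k) * a p.2 ^ p.1 := by
  have h1 : ghostOn k S a η
      = ∑ᶠ p ∈ {p : ℕ × (Fin n → ℤ) | GhCond S η p}, (content p.2 : k) * a p.2 ^ p.1 := rfl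
  rw [h1, finsum_mem_eq_finite_toFinset_sum _ (ghCond_finite S η)]
  rfl

lemma content_eq_zero_iff {γ : Fin n → ℤ} : content γ = 0 ↔ γ = 0 := by
  unfold content
  rw [Finset.gcd_eq_zero_iff]
  constructor
  · intro h; funext i
    simpa [Int.natAbs_eq_zero] using h i (Finset.mem_univ i)
  · rintro rfl i _; simp

lemma content_nsmul (e : ℕ) (γ : Fin n → ℤ) : content (e • γ) = e * content γ := by
  unfold content
  have : (fun i => ((e • γ) i).natAbs) = fun i => e * (γ i).natAbs := by
    funext i
    simp [Pi.smul_apply, nsmul_eq_mul, Int.natAbs_mul]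
  rw [this, Finset.gcd_mul_left]
  simp

/-- The "lower order" part of the ghost sum. -/
noncomputable def ghRest (S : Set (Fin n → ℤ)) (a : (Fin n → ℤ) → k) (η : Fin n → ℤ) : k :=
  ∑ p ∈ (ghFinset S η).erase (1, η), (content p.2 : k) * a p.2 ^ p.1

lemma ghRest_lt {S : Set (Fin n → ℤ)} {η : Fin n → ℤ} {p : ℕ × (Fin n → ℤ)}
    (hp : p ∈ (ghFinset S η).erase (1, η)) : content p.2 < content η := by
  obtain ⟨hne, hmem⟩ := Finset.mem_erase.mp hp
  obtain ⟨h1, _, h3, h4⟩ := mem_ghFinset.mp hmem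
  have h2le : 2 ≤ p.1 := by
    by_contra hlt
    have he1 : p.1 = 1 := by omega
    apply hne
    have : p.2 = η := by rw [← h4, he1, one_smul]
    exact Prod.ext he1 this
  have hcη : content η = p.1 * content p.2 := by rw [← h4, content_nsmul]
  have hc2 : content p.2 ≠ 0 := fun h => h3 (content_eq_zero_iff.mp h)
  have hpos := Nat.pos_of_ne_zero hc2
  have : 2 * content p.2 ≤ p.1 * content p.2 := Nat.mul_le_mul_right _ h2le
  omega

lemma ghostOn_split {Γ : AddSubmonoid (Fin n → ℤ)} {η : Fin n → ℤ}
    (hη : η ∈ Γ) (hη0 : η ≠ 0) (a : (Fin n → ℤ) → k) :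
    ghostOn k (Γ : Set (Fin n → ℤ)) a η
      = (content η : k) * a η + ghRest (Γ : Set (Fin n → ℤ)) a η := by
  rw [ghostOn_eq_sum]
  have hmem : ((1 : ℕ), η) ∈ ghFinset (Γ : Set (Fin n → ℤ)) η :=
    mem_ghFinset.mpr ⟨le_refl 1, hη, hη0, one_smul _ _⟩
  rw [← Finset.add_sum_erase _ _ hmem]
  simp [ghRest]

lemma ghostOn_zero {Γ : AddSubmonoid (Fin n → ℤ)} {η : Fin n → ℤ}
    (h : η ∉ Γ ∨ η = 0) (a : (Fin n → ℤ) → k) :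
    ghostOn k (Γ : Set (Fin n → ℤ)) a η = 0 := by
  rw [ghostOn_eq_sum]
  have : ghFinset (Γ : Set (Fin n → ℤ)) η = ∅ := by
    ext ⟨e, γ⟩
    simp only [mem_ghFinset, Finset.notMem_empty, iff_false]
    rintro ⟨h1, h2, h3, h4⟩
    have hmem : η ∈ Γ := h4 ▸ AddSubmonoid.nsmul_mem Γ h2 e
    rcases h with h | rfl
    · exact h hmem
    · apply h3
      funext i
      have t := congrFun h4 i
      simp only [Pi.smul_apply, nsmul_eq_mul, Pi.zero_apply] at t
      have he : (e : ℤ) ≠ 0 := by exact_mod_cast Nat.one_le_iff_ne_zero.mp h1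
      exact (mul_eq_zero.mp t).resolve_left he
  rw [this, Finset.sum_empty]

lemma ghRest_congr {S : Set (Fin n → ℤ)} {η : Fin n → ℤ} {a a' : (Fin n → ℤ) → k}
    (h : ∀ γ, content γ < content η → a γ = a' γ) :
    ghRest S a η = ghRest S a' η :=
  Finset.sum_congr rfl fun p hp => by rw [h p.2 (ghRest_lt hp)]

variable [Algebra ℚ k]

open Classical in
/-- The recursion operator whose fixed points are solutions of `ghostOn a = b`. -/
noncomputable def Fb (Γ : AddSubmonoid (Fin n → ℤ)) (b a : (Fin n → ℤ) → k) :
    (Fin n → ℤ) → k := fun η =>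
  if η ∈ Γ ∧ η ≠ 0 then
    ((content η : ℚ)⁻¹) • (b η - ghRest (Γ : Set (Fin n → ℤ)) a η)
  else 0

lemma Fb_congr {Γ : AddSubmonoid (Fin n → ℤ)} {b a a' : (Fin n → ℤ) → k} {η : Fin n → ℤ}
    (h : ∀ γ, content γ < content η → a γ = a' γ) :
    Fb Γ b a η = Fb Γ b a' η := by
  unfold Fb
  rw [ghRest_congr h]

lemma fb_fixed_unique {Γ : AddSubmonoid (Fin n → ℤ)} {b a a' : (Fin n → ℤ) → k}
    (ha : a = Fb Γ b a) (ha' : a' = Fb Γ b a') : a = a' := by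
  have key : ∀ m : ℕ, ∀ η, content η < m → a η = a' η := by
    intro m
    induction m using Nat.strong_induction_on with
    | _ m ih =>
      intro η hη
      calc a η = Fb Γ b a η := by rw [← ha]
        _ = Fb Γ b a' η := Fb_congr (fun γ hγ => ih (content η) hη γ hγ)
        _ = a' η := by rw [← ha']
  funext η
  exact key (content η + 1) η (Nat.lt_succ_self _)

/-- The solution, built by iteration. -/
noncomputable def ghSol (Γ : AddSubmonoid (Fin n → ℤ)) (b : (Fin n → ℤ) → k) :
    (Fin n → ℤ) → k := fun η => (Fb Γ b)^[content η + 1] 0 η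

lemma ghSol_stab {Γ : AddSubmonoid (Fin n → ℤ)} {b : (Fin n → ℤ) → k} :
    ∀ m : ℕ, ∀ γ, content γ < m → (Fb Γ b)^[m] 0 γ = ghSol Γ b γ := by
  intro m
  induction m using Nat.strong_induction_on with
  | _ m ih =>
    intro γ hγ
    obtain ⟨m', rfl⟩ : ∃ m', m = m' + 1 := ⟨m - 1, by omega⟩
    rw [Function.iterate_succ_apply']
    have hgs : ghSol Γ b γ = Fb Γ b ((Fb Γ b)^[content γ] 0) γ := by
      unfold ghSol
      rw [Function.iterate_succ_apply']
    rw [hgs]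
    apply Fb_congr
    intro δ hδ
    rw [ih m' (Nat.lt_succ_self _) δ (by omega), ih (content γ) hγ δ hδ]

lemma ghSol_fixed {Γ : AddSubmonoid (Fin n → ℤ)} {b : (Fin n → ℤ) → k} :
    ghSol Γ b = Fb Γ b (ghSol Γ b) := by
  funext η
  have h : ghSol Γ b η = Fb Γ b ((Fb Γ b)^[content η] 0) η := by
    unfold ghSol
    rw [Function.iterate_succ_apply']
  rw [h]
  exact Fb_congr fun δ hδ => ghSol_stab (content η) δ hδ

lemma natCast_mul_eq_smul (c : ℕ) (x : k) : (c : k) * x = (c : ℚ) • x := by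
  rw [Algebra.smul_def, map_natCast]

/-- The key equivalence: pointed solutions of the ghost equation are exactly
fixed points of `Fb`. -/
lemma ghost_iff_fixed {Γ : AddSubmonoid (Fin n → ℤ)} {b : (Fin n → ℤ) → k}
    (hb : PointedFun Γ b) (a : (Fin n → ℤ) → k) :
    (PointedFun Γ a ∧ ghostOn k (Γ : Set (Fin n → ℤ)) a = b) ↔ a = Fb Γ b a := by
  constructor
  · rintro ⟨⟨ha0, haΓ⟩, hgh⟩
    funext η
    by_cases h : η ∈ Γ ∧ η ≠ 0
    · rw [Fb, if_pos h]
      have hc : (content η : ℚ) ≠ 0 := by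
        exact_mod_cast fun hz => h.2 (content_eq_zero_iff.mp hz)
      have heq : (content η : k) * a η + ghRest (Γ : Set (Fin n → ℤ)) a η = b η := by
        rw [← ghostOn_split h.1 h.2 a, hgh]
      have h2 : (content η : ℚ) • a η = b η - ghRest (Γ : Set (Fin n → ℤ)) a η := by
        rw [← natCast_mul_eq_smul]
        linear_combination heq
      rw [← h2, smul_smul, inv_mul_cancel₀ hc, one_smul]
    · rw [Fb, if_neg h]
      rcases not_and_or.mp h with h | h
      · exact haΓ η h
      · rw [not_not.mp h]; exact ha0
  · intro hfix
    have hpt : PointedFun Γ a := by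
      constructor
      · rw [hfix, Fb, if_neg (by simp)]
      · intro x hx
        rw [hfix, Fb, if_neg (by tauto)]
    refine ⟨hpt, ?_⟩
    funext η
    by_cases h : η ∈ Γ ∧ η ≠ 0
    · rw [ghostOn_split h.1 h.2 a]
      have hc : (content η : ℚ) ≠ 0 := by
        exact_mod_cast fun hz => h.2 (content_eq_zero_iff.mp hz)
      have haη : a η = ((content η : ℚ)⁻¹) • (b η - ghRest (Γ : Set (Fin n → ℤ)) a η) := by
        conv_lhs => rw [hfix]
        rw [Fb, if_pos h]
      rw [haη, natCast_mul_eq_smul, smul_smul, mul_inv_cancel₀ hc, one_smul]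
      ring
    · have hb0 : b η = 0 := by
        rcases not_and_or.mp h with h | h
        · exact hb.2 η h
        · rw [not_not.mp h]; exact hb.1
      rw [hb0]
      exact ghostOn_zero (by tauto) a

end Aux

/-- For a commutative ℚ-algebra k, the ghost map W_Γ(k) → ∏_{Γ∖0} k is bijective. -/
theorem stmt5 {n : ℕ} (k : Type) [CommRing k] [Algebra ℚ k]
    (Γ : AddSubmonoid (Fin n → ℤ)) (hnorm : IsNormalMonoid Γ) (hunits : NoUnits Γ) :
    ∀ b : (Fin n → ℤ) → k, PointedFun Γ b →
      ∃! a : (Fin n → ℤ) → k, PointedFun Γ a ∧ ghostOn k (Γ : Set (Fin n → ℤ)) a = b := by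
  intro b hb
  refine ⟨ghSol Γ b, (ghost_iff_fixed hb _).mpr ghSol_fixed, fun a' ha' => ?_⟩
  exact fb_fixed_unique ((ghost_iff_fixed hb a').mp ha') ghSol_fixed
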